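/- arXiv:1409.8055 — 5 statements merged into one kernel-verified Lean document; each statement's English description precedes it below -/
import Mathlib

section
/- In a strictly convex two-dimensional normed space, if two distinct points p and q both lie on the unit sphere S(o,1) centered at the origin and also on the unit sphere S(x,1) centered at x ≠ o, then x = p + q. -/
/-!
Modulo the line `ℝ ∙ x` the plane is one-dimensional, so after possibly swapping `p` and `q`,
`q ≡ c • p` with `|c| ≤ 1`. The point `w = ((1 + c) / 2) • p + ((1 - c) / 2) • (x - p)` of the
chord `[p, x - p]` of the lens `closedBall 0 1 ∩ closedBall x 1` is then congruent to `q` modulo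
`x`. By strict convexity the line `q + ℝ ∙ x` meets the lens only at the corner `q`, so `w = q`;
and a point of the unit sphere lying on a chord of the unit ball is one of its endpoints, so
`q = x - p`.
-/

open Metric Module

section LinearAlgebra

variable {K V : Type*} [Field K] [LinearOrder K] [IsStrictOrderedRing K] [AddCommGroup V]
  [Module K V]

theorem exists_abs_le_one_smul_eq_or_smul_eq (hV : finrank K V = 1) (u v : V) :
    ∃ c : K, |c| ≤ 1 ∧ (v = c • u ∨ u = c • v) := by
  rcases eq_or_ne u 0 with rfl | hu
  · exact ⟨0, by simp, Or.inr (zero_smul K v).symm⟩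
  obtain ⟨c, rfl⟩ := (finrank_eq_one_iff_of_nonzero' u hu).1 hV v
  rcases le_total |c| 1 with hc | hc
  · exact ⟨c, hc, Or.inl rfl⟩
  · refine ⟨c⁻¹, by rwa [abs_inv, inv_le_one₀ (zero_lt_one.trans_le hc)], Or.inr ?_⟩
    rw [smul_smul, inv_mul_cancel₀ (by rintro rfl; norm_num at hc), one_smul]

theorem exists_abs_le_one_sub_smul_mem_span_singleton (hV : finrank K V = 2) {x : V}
    (hx : x ≠ 0) (p q : V) :
    ∃ c : K, |c| ≤ 1 ∧ (q - c • p ∈ K ∙ x ∨ p - c • q ∈ K ∙ x) := by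
  have : Module.Finite K V := Module.finite_of_finrank_eq_succ hV
  have hquot : finrank K (V ⧸ K ∙ x) = 1 := by
    have := (K ∙ x).finrank_quotient_add_finrank
    rw [finrank_span_singleton hx, hV] at this
    omega
  obtain ⟨c, hc, h | h⟩ := exists_abs_le_one_smul_eq_or_smul_eq hquot
    (Submodule.Quotient.mk p) (Submodule.Quotient.mk q)
  · exact ⟨c, hc, Or.inl ((Submodule.Quotient.eq _).1 h)⟩
  · exact ⟨c, hc, Or.inr ((Submodule.Quotient.eq _).1 h)⟩

end LinearAlgebra

section StrictConvex

variable {X : Type*} [NormedAddCommGroup X] [NormedSpace ℝ X] [StrictConvexSpace ℝ X]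
  {r : ℝ} {a b p q w x z : X}

theorem eq_or_eq_of_mem_segment_of_mem_sphere (ha : a ∈ closedBall z r) (hb : b ∈ closedBall z r)
    (hw : w ∈ segment ℝ a b) (hwr : w ∈ sphere z r) : w = a ∨ w = b := by
  rw [← insert_endpoints_openSegment] at hw
  obtain rfl | rfl | hw := hw
  · exact Or.inl rfl
  · exact Or.inr rfl
  obtain rfl | hab := eq_or_ne a b
  · rw [openSegment_same] at hw
    exact Or.inl hw
  · exact (sphere_disjoint_ball.ne_of_mem hwr (openSegment_subset_ball_of_ne ha hb hab hw)
      rfl).elim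

theorem eq_of_mem_closedBall_inter_of_sub_mem_span_singleton (hx : x ≠ 0)
    (hq : q ∈ sphere 0 r ∩ sphere x r) (hw : w ∈ closedBall 0 r ∩ closedBall x r)
    (hwq : w - q ∈ ℝ ∙ x) : w = q := by
  obtain ⟨t, ht⟩ := Submodule.mem_span_singleton.1 hwq
  obtain rfl : w = q + t • x := by rw [ht]; abel
  obtain ht | ht := le_total 0 t
  · have hqx : q - x ∈ closedBall 0 r := mem_closedBall_zero_iff.2 (mem_sphere_iff_norm.1 hq.2).le
    have hseg : q ∈ segment ℝ (q + t • x) (q - x) := mem_segment_iff_sameRay.2 <| by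
      simpa using SameRay.sameRay_nonneg_smul_left (R := ℝ) (-x) ht
    obtain h | h := eq_or_eq_of_mem_segment_of_mem_sphere hw.1 hqx hseg hq.1
    · exact h.symm
    · exact absurd (sub_eq_self.1 h.symm) hx
  · have hqx : q + x ∈ closedBall x r := by simpa [dist_eq_norm] using hq.1.le
    have hseg : q ∈ segment ℝ (q + t • x) (q + x) := mem_segment_iff_sameRay.2 <| by
      simpa using SameRay.sameRay_nonneg_smul_left (R := ℝ) x (neg_nonneg.2 ht)
    obtain h | h := eq_or_eq_of_mem_segment_of_mem_sphere hw.2 hqx hseg hq.2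
    · exact h.symm
    · exact absurd (add_eq_left.1 h.symm) hx

theorem eq_add_of_sub_smul_mem_span_singleton (hx : x ≠ 0) (hpq : p ≠ q)
    (hp : p ∈ closedBall 0 r ∩ closedBall x r) (hq : q ∈ sphere 0 r ∩ sphere x r) {c : ℝ}
    (hc : |c| ≤ 1) (hcq : q - c • p ∈ ℝ ∙ x) : x = p + q := by
  have hxp : x - p ∈ closedBall 0 r ∩ closedBall x r :=
    ⟨mem_closedBall_zero_iff.2 (dist_eq_norm' p x ▸ hp.2), by simpa [dist_eq_norm] using hp.1⟩
  have hseg : ((1 + c) / 2) • p + ((1 - c) / 2) • (x - p) ∈ segment ℝ p (x - p) :=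
    ⟨_, _, by linarith [abs_le.1 hc], by linarith [abs_le.1 hc], by ring, rfl⟩
  have hw := ((convex_closedBall 0 r).inter (convex_closedBall x r)).segment_subset hp hxp hseg
  have hwq : ((1 + c) / 2) • p + ((1 - c) / 2) • (x - p) = q := by
    refine eq_of_mem_closedBall_inter_of_sub_mem_span_singleton hx hq hw ?_
    have : ((1 + c) / 2) • p + ((1 - c) / 2) • (x - p) - q = ((1 - c) / 2) • x - (q - c • p) := by
      module
    rw [this]
    exact sub_mem (Submodule.smul_mem _ _ (Submodule.mem_span_singleton_self x)) hcq
  rw [hwq] at hseg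
  obtain h | h := eq_or_eq_of_mem_segment_of_mem_sphere hp.1 hxp.1 hseg hq.1
  · exact absurd h.symm hpq
  · rw [h]; abel

end StrictConvex

/-- In a strictly convex two-dimensional normed space, if distinct points `p, q`
lie on the unit sphere about `0` and on the unit sphere about `x ≠ 0`,
then `x = p + q`. -/
theorem center_eq_add_of_two_unit_circles {X : Type*} [NormedAddCommGroup X]
    [NormedSpace ℝ X] [StrictConvexSpace ℝ X] (hdim : Module.finrank ℝ X = 2)
    (p q x : X) (hpq : p ≠ q) (hp : ‖p‖ = 1) (hq : ‖q‖ = 1)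
    (hpx : ‖p - x‖ = 1) (hqx : ‖q - x‖ = 1) (hx : x ≠ 0) :
    x = p + q := by
  have hp' : p ∈ sphere 0 1 ∩ sphere x 1 :=
    ⟨mem_sphere_zero_iff_norm.2 hp, mem_sphere_iff_norm.2 hpx⟩
  have hq' : q ∈ sphere 0 1 ∩ sphere x 1 :=
    ⟨mem_sphere_zero_iff_norm.2 hq, mem_sphere_iff_norm.2 hqx⟩
  have hball {z : X} (hz : z ∈ sphere 0 1 ∩ sphere x 1) : z ∈ closedBall 0 1 ∩ closedBall x 1 :=
    Set.inter_subset_inter sphere_subset_closedBall sphere_subset_closedBall hz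
  obtain ⟨c, hc, hcq | hcp⟩ := exists_abs_le_one_sub_smul_mem_span_singleton hdim hx p q
  · exact eq_add_of_sub_smul_mem_span_singleton hx hpq (hball hp') hq' hc hcq
  · rw [add_comm]
    exact eq_add_of_sub_smul_mem_span_singleton hx hpq.symm (hball hq') hp' hc hcp
end

section
/- In a strictly convex two-dimensional normed space, if two distinct points p and q lie on two unit circles S(o,1) and S(x,1) with x ≠ o, then o and x lie strictly on opposite sides of the line through p and q. -/
/-!
The points `p - x` and `q - x` lie on the unit circle and form a chord with the same vector
`p - q` as the chord `pq`. In a strictly convex plane such a chord is unique up to the symmetry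
`m ↦ -m` of its midpoint: writing the chords as `m ± e` and `m' ± e`, in the plane one midpoint
is `a • m' + c • e` with `|a| ≤ 1`, say; the points `a • m' ± e` lie in the unit ball by
convexity, and since the line `m + ℝ e` meets the ball only in the segment `[m - e, m + e]` this
forces `c = 0`, after which strict convexity rules out `|a| < 1`. As `x ≠ 0`, this gives
`x = p + q`, and an affine `f` vanishing at `p` and `q` has `f (p + q) = -f 0`.
-/

open Module

section Dependency

variable {K V : Type*} [Field K] [AddCommGroup V] [Module K V]

theorem exists_smul_add_smul_eq_smul [FiniteDimensional K V] (hV : finrank K V ≤ 2)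
    (u v : V) {e : V} (he : e ≠ 0) :
    ∃ α β γ : K, (α ≠ 0 ∨ β ≠ 0) ∧ α • u + β • v = γ • e := by
  have hdep : ¬LinearIndependent K ![u, v, e] := fun h => by
    have := h.fintype_card_le_finrank
    simp only [Fintype.card_fin] at this
    omega
  obtain ⟨g, hg, i, hi⟩ := Fintype.not_linearIndependent_iff.mp hdep
  simp only [Fin.sum_univ_three, Matrix.cons_val_zero, Matrix.cons_val_one,
    Matrix.cons_val_two, Matrix.head_cons, Matrix.tail_cons] at hg
  refine ⟨g 0, g 1, -g 2, ?_, by rw [neg_smul, ← add_eq_zero_iff_eq_neg.mp hg]⟩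
  by_contra! h
  rw [h.1, h.2, zero_smul, zero_smul, zero_add, zero_add, smul_eq_zero] at hg
  have h2 : g 2 = 0 := hg.resolve_right he
  fin_cases i <;> simp_all

end Dependency

namespace AffineMap

variable {k V W : Type*} [Ring k] [AddCommGroup V] [Module k V] [AddCommGroup W] [Module k W]

theorem map_add_eq_sub (f : V →ᵃ[k] W) (u v : V) : f (u + v) = f u + f v - f 0 := by
  have h (w : V) : f w = f.linear w + f 0 := congrFun f.decomp w
  rw [h (u + v), h u, h v, map_add]
  abel

theorem eq_zero_of_span_eq_top {s : Set V} (hs : Submodule.span k s = ⊤) (f : V →ᵃ[k] W)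
    (h0 : f 0 = 0) (hf : ∀ v ∈ s, f v = 0) : f = 0 := by
  have hlin : f.linear = 0 := LinearMap.ext_on hs fun v hv => by
    simp [f.decomp', h0, hf v hv]
  exact ext_linear hlin (p := 0) (by simp [h0])

end AffineMap

section Chord

variable {X : Type*} [NormedAddCommGroup X] [NormedSpace ℝ X]

theorem norm_smul_add_le_one {m e : X} {a : ℝ} (ha : |a| ≤ 1) (hadd : ‖m + e‖ ≤ 1)
    (hsub : ‖m - e‖ ≤ 1) : ‖a • m + e‖ ≤ 1 := by
  have hcomb : a • m + e = ((1 + a) / 2) • (m + e) + ((1 - a) / 2) • -(m - e) := by module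
  rw [hcomb, ← mem_closedBall_zero_iff]
  obtain ⟨ha₁, ha₂⟩ := abs_le.mp ha
  exact convex_closedBall (0 : X) 1 (mem_closedBall_zero_iff.mpr hadd)
    (mem_closedBall_zero_iff.mpr (by rwa [norm_neg])) (by linarith) (by linarith) (by ring)

theorem linearIndependent_pair_of_norm_eq {p q : X} (hq : q ≠ 0) (hpq : ‖p‖ = ‖q‖)
    (hne : p ≠ q) (hne' : p ≠ -q) : LinearIndependent ℝ ![p, q] := by
  refine linearIndependent_fin2.mpr ⟨by simpa using hq, fun a ha => ?_⟩
  simp only [Matrix.cons_val_one, Matrix.cons_val_zero] at ha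
  have habs : |a| = 1 := by
    rw [← ha, norm_smul, Real.norm_eq_abs] at hpq
    exact (mul_eq_right₀ (norm_ne_zero_iff.mpr hq)).mp hpq
  rcases (abs_eq zero_le_one).mp habs with rfl | rfl
  · exact hne (by rw [← ha, one_smul])
  · exact hne' (by rw [← ha, neg_one_smul])

variable [StrictConvexSpace ℝ X]

theorem norm_smul_add_lt_one {m e : X} {a : ℝ} (ha : |a| < 1) (hm : m ≠ 0)
    (hadd : ‖m + e‖ ≤ 1) (hsub : ‖m - e‖ ≤ 1) : ‖a • m + e‖ < 1 := by
  have hcomb : a • m + e = ((1 + a) / 2) • (m + e) + ((1 - a) / 2) • -(m - e) := by module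
  have hne : m + e ≠ -(m - e) := fun h => hm <| by
    have h2m : (2 : ℝ) • m = m + e - -(m - e) := by module
    rw [h, sub_self] at h2m
    exact (smul_eq_zero.mp h2m).resolve_left two_ne_zero
  obtain ⟨ha₁, ha₂⟩ := abs_lt.mp ha
  rw [hcomb]
  exact norm_combo_lt_of_ne hadd (by rwa [norm_neg]) hne (by linarith) (by linarith) (by ring)

theorem le_one_of_norm_add_smul_le_one {m e : X} {s : ℝ} (he : e ≠ 0) (hadd : ‖m + e‖ = 1)
    (hsub : ‖m - e‖ ≤ 1) (hs : ‖m + s • e‖ ≤ 1) : s ≤ 1 := by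
  by_contra! hs₁
  have hs₀ : s + 1 ≠ 0 := by linarith
  have hcomb : m + e = ((s - 1) / (s + 1)) • (m - e) + (2 / (s + 1)) • (m + s • e) := by
    match_scalars <;> field_simp <;> ring
  have hne : m - e ≠ m + s • e := fun h => he <| by
    have hse : (s + 1) • e = m + s • e - (m - e) := by module
    rw [← h, sub_self] at hse
    exact (smul_eq_zero.mp hse).resolve_left hs₀
  have := norm_combo_lt_of_ne hsub hs hne (a := (s - 1) / (s + 1)) (b := 2 / (s + 1))
    (div_pos (by linarith) (by linarith)) (div_pos (by linarith) (by linarith))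
    (by field_simp; ring)
  rw [← hcomb, hadd] at this
  exact lt_irrefl _ this

theorem abs_le_one_of_norm_add_smul_le_one {m e : X} {s : ℝ} (he : e ≠ 0)
    (hadd : ‖m + e‖ = 1) (hsub : ‖m - e‖ = 1) (hs : ‖m + s • e‖ ≤ 1) : |s| ≤ 1 := by
  refine abs_le.mpr ⟨?_, le_one_of_norm_add_smul_le_one he hadd hsub.le hs⟩
  have := le_one_of_norm_add_smul_le_one (neg_ne_zero.mpr he) (s := -s)
    (by rwa [← sub_eq_add_neg]) (by rw [sub_neg_eq_add]; exact hadd.le) (by rwa [neg_smul_neg])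
  linarith

theorem eq_zero_of_norm_add_smul_add_le_one {m e : X} {c : ℝ} (he : e ≠ 0)
    (hadd : ‖m + e‖ = 1) (hsub : ‖m - e‖ = 1) (hadd' : ‖m + c • e + e‖ ≤ 1)
    (hsub' : ‖m + c • e - e‖ ≤ 1) : c = 0 := by
  have hc_add := abs_le_one_of_norm_add_smul_le_one (s := c + 1) he hadd hsub
    (by rwa [add_smul, one_smul, ← add_assoc])
  have hc_sub := abs_le_one_of_norm_add_smul_le_one (s := c - 1) he hadd hsub
    (by rwa [sub_smul, one_smul, ← add_sub_assoc])
  linarith [abs_le.mp hc_add, abs_le.mp hc_sub]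

theorem eq_or_eq_neg_of_eq_smul_add_smul {m₁ m₂ e : X} {a c : ℝ} (he : e ≠ 0)
    (hadd₁ : ‖m₁ + e‖ = 1) (hsub₁ : ‖m₁ - e‖ = 1) (hadd₂ : ‖m₂ + e‖ = 1)
    (hsub₂ : ‖m₂ - e‖ = 1) (ha : |a| ≤ 1) (hm : m₁ = a • m₂ + c • e) :
    m₁ = m₂ ∨ m₁ = -m₂ := by
  have hneg_add : ‖m₂ + -e‖ ≤ 1 := by rw [← sub_eq_add_neg]; exact hsub₂.le
  have hneg_sub : ‖m₂ - -e‖ ≤ 1 := by rw [sub_neg_eq_add]; exact hadd₂.le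
  have hc : -c = 0 := by
    refine eq_zero_of_norm_add_smul_add_le_one he hadd₁ hsub₁ ?_ ?_
    · rw [hm, show a • m₂ + c • e + -c • e = a • m₂ by module]
      exact norm_smul_add_le_one ha hadd₂.le hsub₂.le
    · rw [hm, show a • m₂ + c • e + -c • e - e = a • m₂ + -e by module]
      exact norm_smul_add_le_one ha hneg_add hneg_sub
  rw [neg_eq_zero.mp hc, zero_smul, add_zero] at hm
  subst hm
  rcases eq_or_ne m₂ 0 with rfl | hm₂
  · simp
  rcases ha.lt_or_eq with ha | ha
  · exact absurd hadd₁ (norm_smul_add_lt_one ha hm₂ hadd₂.le hsub₂.le).ne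
  · rcases (abs_eq zero_le_one).mp ha with rfl | rfl
    · simp
    · simp

theorem eq_or_eq_neg_of_norm_add_eq_one_of_norm_sub_eq_one [FiniteDimensional ℝ X]
    (hX : finrank ℝ X ≤ 2) {m₁ m₂ e : X} (he : e ≠ 0)
    (hadd₁ : ‖m₁ + e‖ = 1) (hsub₁ : ‖m₁ - e‖ = 1) (hadd₂ : ‖m₂ + e‖ = 1)
    (hsub₂ : ‖m₂ - e‖ = 1) : m₁ = m₂ ∨ m₁ = -m₂ := by
  obtain ⟨α, β, γ, hαβ, hdep⟩ := exists_smul_add_smul_eq_smul hX m₁ m₂ he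
  wlog hle : |β| ≤ |α| generalizing m₁ m₂ α β
  · rcases this hadd₂ hsub₂ hadd₁ hsub₁ β α hαβ.symm (by rwa [add_comm]) (le_of_not_ge hle)
      with h | h
    · exact Or.inl h.symm
    · exact Or.inr (by rw [h, neg_neg])
  have hα : α ≠ 0 := fun hα => by simp_all
  have hm : m₁ = α⁻¹ • (γ • e - β • m₂) := by rw [← hdep, add_sub_cancel_right, inv_smul_smul₀ hα]
  refine eq_or_eq_neg_of_eq_smul_add_smul he hadd₁ hsub₁ hadd₂ hsub₂
    (a := -β / α) (c := γ / α) ?_ (by rw [hm]; module)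
  rw [abs_div, abs_neg]
  exact div_le_one_of_le₀ hle (abs_nonneg α)

theorem eq_or_eq_neg_of_sub_eq_sub [FiniteDimensional ℝ X] (hX : finrank ℝ X ≤ 2)
    {u v u' v' : X} (huv : u ≠ v) (hu : ‖u‖ = 1) (hv : ‖v‖ = 1) (hu' : ‖u'‖ = 1)
    (hv' : ‖v'‖ = 1) (h : u' - v' = u - v) : u' = u ∨ u' = -v := by
  have hmid := eq_or_eq_neg_of_norm_add_eq_one_of_norm_sub_eq_one hX
    (m₁ := (2 : ℝ)⁻¹ • (u' + v')) (m₂ := (2 : ℝ)⁻¹ • (u + v)) (e := (2 : ℝ)⁻¹ • (u - v))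
    (smul_ne_zero (by norm_num) (sub_ne_zero.mpr huv))
    (by rwa [← h, show (2 : ℝ)⁻¹ • (u' + v') + (2 : ℝ)⁻¹ • (u' - v') = u' by module])
    (by rwa [← h, show (2 : ℝ)⁻¹ • (u' + v') - (2 : ℝ)⁻¹ • (u' - v') = v' by module])
    (by rwa [show (2 : ℝ)⁻¹ • (u + v) + (2 : ℝ)⁻¹ • (u - v) = u by module])
    (by rwa [show (2 : ℝ)⁻¹ • (u + v) - (2 : ℝ)⁻¹ • (u - v) = v by module])
  rcases hmid with hm | hm
  · left
    calc u' = (2 : ℝ)⁻¹ • (u' + v') + (2 : ℝ)⁻¹ • (u' - v') := by module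
      _ = u := by rw [hm, h]; module
  · right
    calc u' = (2 : ℝ)⁻¹ • (u' + v') + (2 : ℝ)⁻¹ • (u' - v') := by module
      _ = -v := by rw [hm, h]; module

end Chord

/-- In a strictly convex two-dimensional normed space, if distinct points `p, q`
lie on the unit circles centered at `0` and at `x ≠ 0`, then `0` and `x` are
strictly on opposite sides of the line through `p` and `q`: every nonzero
affine functional vanishing at `p` and `q` takes values of opposite sign at
`0` and `x`. -/
theorem centers_opposite_sides {X : Type*} [NormedAddCommGroup X]
    [NormedSpace ℝ X] [StrictConvexSpace ℝ X] (hdim : Module.finrank ℝ X = 2)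
    (p q x : X) (hpq : p ≠ q) (hp : ‖p‖ = 1) (hq : ‖q‖ = 1)
    (hpx : ‖p - x‖ = 1) (hqx : ‖q - x‖ = 1) (hx : x ≠ 0) :
    ∀ f : X →ᵃ[ℝ] ℝ, f ≠ 0 → f p = 0 → f q = 0 → f 0 * f x < 0 := by
  intro f hf hfp hfq
  have : FiniteDimensional ℝ X := .of_finrank_eq_succ hdim
  have hx_eq : x = p + q := by
    rcases eq_or_eq_neg_of_sub_eq_sub hdim.le hpq hp hq hpx hqx (sub_sub_sub_cancel_right p q x)
      with h | h
    · exact absurd (sub_eq_self.mp h) hx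
    · rw [← sub_eq_zero, show x - (p + q) = -q - (p - x) by abel, h, sub_self]
  have hli : LinearIndependent ℝ ![p, q] :=
    linearIndependent_pair_of_norm_eq (norm_ne_zero_iff.mp (by rw [hq]; exact one_ne_zero))
      (hp.trans hq.symm) hpq (fun h => hx (by rw [hx_eq, h, neg_add_cancel]))
  have hspan : Submodule.span ℝ (Set.range ![p, q]) = ⊤ :=
    hli.span_eq_top_of_card_eq_finrank (by simp [hdim])
  have hf0 : f 0 ≠ 0 := fun h0 => hf <| f.eq_zero_of_span_eq_top hspan h0 <| by
    rintro _ ⟨i, rfl⟩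
    fin_cases i <;> simpa
  have hfx : f x = -f 0 := by
    rw [hx_eq, f.map_add_eq_sub, hfp, hfq]
    ring
  rw [hfx, mul_neg, neg_lt_zero]
  exact mul_self_pos.mpr hf0
end

section
/- In a strictly convex normed space, for any two distinct points p, q on the unit sphere, the points o = 0 and x = p + q are the only possible centers of unit balls whose boundary contains both p and q; consequently there are at most two unit circles through any two distinct points at distance less than 2. -/
section Aux

variable {X : Type*} [NormedAddCommGroup X] [NormedSpace ℝ X]

/-- Affine combination along a line: if `m = θ*s + (1-θ)*t` then
`p + m•d = θ•(p+s•d) + (1-θ)•(p+t•d)`. -/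
lemma combo_eq (p d : X) (θ s m t : ℝ) (hm : θ * s + (1 - θ) * t = m) :
    p + m • d = θ • (p + s • d) + (1 - θ) • (p + t • d) := by
  match_scalars <;> linarith

/-- Convexity of the norm along a line, with one strict endpoint. -/
lemma mid_lt (p d : X) (s m t : ℝ) (h1 : s < m) (h2 : m < t)
    (hs : ‖p + s • d‖ ≤ 1) (ht : ‖p + t • d‖ ≤ 1)
    (hstrict : ‖p + s • d‖ < 1 ∨ ‖p + t • d‖ < 1) : ‖p + m • d‖ < 1 := by
  set θ : ℝ := (t - m) / (t - s) with hθdef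
  have hts : (0:ℝ) < t - s := by linarith
  have hθ0 : 0 < θ := div_pos (by linarith) hts
  have hθ1 : θ < 1 := (div_lt_one hts).2 (by linarith)
  have h0 : t - s ≠ 0 := ne_of_gt hts
  have hcombo : p + m • d = θ • (p + s • d) + (1 - θ) • (p + t • d) := by
    apply combo_eq
    rw [hθdef]
    field_simp
    ring
  rw [hcombo]
  calc ‖θ • (p + s • d) + (1 - θ) • (p + t • d)‖
      ≤ ‖θ • (p + s • d)‖ + ‖(1 - θ) • (p + t • d)‖ := norm_add_le _ _
    _ = θ * ‖p + s • d‖ + (1 - θ) * ‖p + t • d‖ := by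
        rw [norm_smul, norm_smul, Real.norm_eq_abs, Real.norm_eq_abs,
          abs_of_pos hθ0, abs_of_pos (by linarith)]
    _ < 1 := by
        rcases hstrict with h | h
        · nlinarith
        · nlinarith

/-- Three distinct points on a line cannot all lie on the unit sphere of a
strictly convex space. -/
lemma three_collinear [StrictConvexSpace ℝ X] (x d : X) (hd : d ≠ 0)
    (s₁ s₂ s₃ : ℝ) (h12 : s₁ < s₂) (h23 : s₂ < s₃)
    (hn1 : ‖x - s₁ • d‖ = 1) (hn2 : ‖x - s₂ • d‖ = 1) (hn3 : ‖x - s₃ • d‖ = 1) :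
    False := by
  set θ : ℝ := (s₃ - s₂) / (s₃ - s₁) with hθdef
  have hts : (0:ℝ) < s₃ - s₁ := by linarith
  have hθ0 : 0 < θ := div_pos (by linarith) hts
  have hθ1 : θ < 1 := (div_lt_one hts).2 (by linarith)
  have hne : x - s₁ • d ≠ x - s₃ • d := by
    intro h
    have heq : s₁ • d = s₃ • d := sub_right_injective h
    have h' : (s₁ - s₃) • d = 0 := by rw [sub_smul, heq, sub_self]
    rcases smul_eq_zero.mp h' with h'' | h''
    · have : s₁ ≠ s₃ := by linarith
      exact this (by linarith [sub_eq_zero.mp h''])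
    · exact hd h''
  have h0 : s₃ - s₁ ≠ 0 := ne_of_gt hts
  have hm : θ * s₁ + (1 - θ) * s₃ = s₂ := by
    rw [hθdef]; field_simp; ring
  have hcombo : x - s₂ • d = θ • (x - s₁ • d) + (1 - θ) • (x - s₃ • d) := by
    have := combo_eq x (-d) θ s₁ s₂ s₃ hm
    rw [smul_neg, smul_neg, smul_neg, ← sub_eq_add_neg, ← sub_eq_add_neg,
      ← sub_eq_add_neg] at this
    exact this
  have hlt : ‖x - s₂ • d‖ < 1 := by
    rw [hcombo]
    exact norm_combo_lt_of_ne hn1.le hn3.le hne hθ0 (by linarith) (by ring)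
  rw [hn2] at hlt
  exact absurd hlt (lt_irrefl 1)

/-- The key convexity contradiction: a point `p` with `‖p‖ < 1` and `‖p - d‖ < 1`
cannot have `‖p + μ•d‖ = 1 = ‖p + (μ-1)•d‖`. -/
lemma conv_contra (p d : X) (μ : ℝ) (hp : ‖p‖ < 1) (hpd : ‖p - d‖ < 1)
    (h1 : ‖p + μ • d‖ = 1) (h2 : ‖p + (μ - 1) • d‖ = 1) : False := by
  have key : ∀ r : ℝ, ‖p + r • d‖ < 1 → μ - 1 < r ∧ r < μ := by
    intro r hr
    constructor
    · by_contra h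
      push_neg at h  -- r ≤ μ - 1
      rcases eq_or_lt_of_le h with h' | h'
      · rw [← h'] at h2; linarith [h2 ▸ hr]
      · -- r < μ - 1 < μ, strict at left endpoint r
        have := mid_lt p d r (μ - 1) μ h' (by linarith) hr.le h1.le (Or.inl hr)
        rw [h2] at this; exact absurd this (lt_irrefl 1)
    · by_contra h
      push_neg at h  -- μ ≤ r
      rcases eq_or_lt_of_le h with h' | h'
      · rw [h'] at h1; linarith [h1 ▸ hr]
      · -- μ - 1 < μ < r, strict at right endpoint r
        have := mid_lt p d (μ - 1) μ r (by linarith) h' h2.le hr.le (Or.inr hr)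
        rw [h1] at this; exact absurd this (lt_irrefl 1)
  have k0 : μ - 1 < 0 ∧ (0:ℝ) < μ := by
    have := key 0 (by simpa using hp)
    simpa using this
  have k1 : μ - 1 < -1 ∧ (-1:ℝ) < μ := by
    have := key (-1) (by simpa [sub_eq_add_neg] using hpd)
    simpa using this
  linarith [k0.2, k1.1]

/-- Collinear case: two distinct unit vectors `x, y` with `x - d, y - d` unit
and `x - y` parallel to `d` give a contradiction. -/
lemma collinear_case [StrictConvexSpace ℝ X] (d x y : X) (hd : d ≠ 0)
    (hxy : x ≠ y) (hx : ‖x‖ = 1) (hx' : ‖x - d‖ = 1)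
    (hy : ‖y‖ = 1) (hy' : ‖y - d‖ = 1) (t : ℝ) (ht : x - y = t • d) : False := by
  have ht0 : t ≠ 0 := by
    intro h
    rw [h, zero_smul, sub_eq_zero] at ht
    exact hxy ht
  have e0 : ‖x - (0:ℝ) • d‖ = 1 := by simpa using hx
  have e1 : ‖x - (1:ℝ) • d‖ = 1 := by simpa using hx'
  have ety : x - t • d = y := by rw [← ht]; abel
  have et : ‖x - t • d‖ = 1 := by rw [ety]; exact hy
  have et1 : ‖x - (1 + t) • d‖ = 1 := by
    have : x - (1 + t) • d = y - d := by
      rw [add_smul, one_smul, ← ety]; abel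
    rw [this]; exact hy'
  rcases lt_or_gt_of_ne ht0 with h | h
  · exact three_collinear x d hd t 0 1 h one_pos et e0 e1
  · exact three_collinear x d hd 0 1 (1 + t) one_pos (by linarith) e0 e1 et1

/-- Middle case: `y` strictly between `x` and `z` modulo `d`. -/
lemma middle_case [StrictConvexSpace ℝ X] (d x y z : X)
    (hxz : x ≠ z) (hx : ‖x‖ = 1) (hx' : ‖x - d‖ = 1)
    (hy : ‖y‖ = 1) (hy' : ‖y - d‖ = 1) (hz : ‖z‖ = 1) (hz' : ‖z - d‖ = 1)
    (l μ : ℝ) (hl0 : 0 < l) (hl1 : l < 1)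
    (hcomb : y = l • x + (1 - l) • z + μ • d) : False := by
  have hp : ‖l • x + (1 - l) • z‖ < 1 :=
    norm_combo_lt_of_ne hx.le hz.le hxz hl0 (by linarith) (by ring)
  have hpd : ‖(l • x + (1 - l) • z) - d‖ < 1 := by
    have hne : x - d ≠ z - d := fun h => hxz (sub_left_injective h)
    have heq : (l • x + (1 - l) • z) - d = l • (x - d) + (1 - l) • (z - d) := by
      match_scalars <;> ring
    rw [heq]
    exact norm_combo_lt_of_ne hx'.le hz'.le hne hl0 (by linarith) (by ring)
  have h1 : ‖(l • x + (1 - l) • z) + μ • d‖ = 1 := by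
    rw [← hcomb]; exact hy
  have h2 : ‖(l • x + (1 - l) • z) + (μ - 1) • d‖ = 1 := by
    have heq : (l • x + (1 - l) • z) + (μ - 1) • d = y - d := by
      rw [hcomb]; match_scalars <;> ring
    rw [heq]; exact hy'
  exact conv_contra (l • x + (1 - l) • z) d μ hp hpd h1 h2

/-- Ordered case with an auxiliary linear functional killing `d`. -/
lemma ordered_case [StrictConvexSpace ℝ X] (d : X) (f : X →ₗ[ℝ] ℝ)
    (hker : ∀ v : X, f v = 0 → ∃ t : ℝ, v = t • d)
    (x y z : X) (hxz : x ≠ z)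
    (hx : ‖x‖ = 1) (hx' : ‖x - d‖ = 1) (hy : ‖y‖ = 1) (hy' : ‖y - d‖ = 1)
    (hz : ‖z‖ = 1) (hz' : ‖z - d‖ = 1)
    (h1 : f x < f y) (h2 : f y < f z) : False := by
  set l : ℝ := (f z - f y) / (f z - f x) with hldef
  have hzx : (0:ℝ) < f z - f x := by linarith
  have hl0 : 0 < l := div_pos (by linarith) hzx
  have hl1 : l < 1 := (div_lt_one hzx).2 (by linarith)
  have hker' : f (y - (l • x + (1 - l) • z)) = 0 := by
    have : f (y - (l • x + (1 - l) • z))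
        = f y - (l * f x + (1 - l) * f z) := by
      simp [map_sub, map_add, map_smul]
    rw [this, hldef]
    field_simp
    ring
  obtain ⟨μ, hμ⟩ := hker' |> hker _
  have hcomb : y = l • x + (1 - l) • z + μ • d := by
    rw [← hμ]; abel
  exact middle_case d x y z hxz hx hx' hy hy' hz hz' l μ hl0 hl1 hcomb

end Aux

/-- In a strictly convex two-dimensional normed space, for distinct points
`a, b` with `‖a − b‖ < 2`, there are at most two centers of unit spheres
through both `a` and `b`. -/
theorem at_most_two_unit_circles {X : Type*} [NormedAddCommGroup X]
    [NormedSpace ℝ X] [StrictConvexSpace ℝ X] (hdim : Module.finrank ℝ X = 2)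
    (a b : X) (hab : a ≠ b) (hd : ‖a - b‖ < 2) :
    {c : X | ‖a - c‖ = 1 ∧ ‖b - c‖ = 1}.encard ≤ 2 := by
  set S : Set X := {c : X | ‖a - c‖ = 1 ∧ ‖b - c‖ = 1} with hS
  by_contra hcon
  push_neg at hcon
  -- extract three distinct elements
  obtain ⟨c₁, c₂, hc₁, hc₂, h12⟩ :=
    Set.one_lt_encard_iff.1 (lt_of_le_of_lt (by norm_num) hcon)
  have hnsub : ¬ S ⊆ {c₁, c₂} := fun hsub =>
    absurd (le_trans (Set.encard_mono hsub) (Set.encard_pair h12).le)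
      (not_le.mpr hcon)
  obtain ⟨c₃, hc₃, hc₃'⟩ := Set.not_subset.1 hnsub
  simp only [Set.mem_insert_iff, Set.mem_singleton_iff, not_or] at hc₃'
  obtain ⟨h13, h23⟩ := hc₃'
  -- set up the vectors
  set dvec : X := a - b with hdvec
  have hdne : dvec ≠ 0 := sub_ne_zero.mpr hab
  have hFD : FiniteDimensional ℝ X := FiniteDimensional.of_finrank_eq_succ hdim
  -- build the functional killing dvec
  have hrank : Module.finrank ℝ (X ⧸ Submodule.span ℝ {dvec}) = 1 := by
    have h1 : Module.finrank ℝ (Submodule.span ℝ {dvec} : Submodule ℝ X) = 1 :=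
      finrank_span_singleton hdne
    have := Submodule.finrank_quotient_add_finrank (Submodule.span ℝ {dvec})
    omega
  obtain ⟨e⟩ : Nonempty ((X ⧸ Submodule.span ℝ {dvec}) ≃ₗ[ℝ] ℝ) :=
    FiniteDimensional.nonempty_linearEquiv_of_finrank_eq
      (by rw [hrank, Module.finrank_self])
  set f : X →ₗ[ℝ] ℝ := (e : (X ⧸ Submodule.span ℝ {dvec}) →ₗ[ℝ] ℝ).comp
    (Submodule.span ℝ {dvec}).mkQ with hf
  have hker : ∀ v : X, f v = 0 → ∃ t : ℝ, v = t • dvec := by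
    intro v hv
    have : (Submodule.span ℝ {dvec}).mkQ v = 0 := by
      apply e.injective
      simpa [hf] using hv
    rw [Submodule.mkQ_apply, Submodule.Quotient.mk_eq_zero] at this
    obtain ⟨t, ht⟩ := Submodule.mem_span_singleton.1 this
    exact ⟨t, ht.symm⟩
  -- unit vector data
  have hxdata : ∀ c ∈ S, ‖a - c‖ = 1 ∧ ‖(a - c) - dvec‖ = 1 := by
    intro c hc
    refine ⟨hc.1, ?_⟩
    have : (a - c) - dvec = b - c := by rw [hdvec]; abel
    rw [this]; exact hc.2
  obtain ⟨hx1, hx1'⟩ := hxdata c₁ hc₁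
  obtain ⟨hx2, hx2'⟩ := hxdata c₂ hc₂
  obtain ⟨hx3, hx3'⟩ := hxdata c₃ hc₃
  set x₁ : X := a - c₁
  set x₂ : X := a - c₂
  set x₃ : X := a - c₃
  have hne12 : x₁ ≠ x₂ := fun h => h12 (sub_right_injective h)
  have hne13 : x₁ ≠ x₃ := fun h => h13 (sub_right_injective h).symm
  have hne23 : x₂ ≠ x₃ := fun h => h23 (sub_right_injective h).symm
  -- distinctness of f-values (else collinear contradiction)
  have hfne : ∀ u v : X, u ≠ v → ‖u‖ = 1 → ‖u - dvec‖ = 1 → ‖v‖ = 1 →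
      ‖v - dvec‖ = 1 → f u ≠ f v := by
    intro u v huv hu hu' hv hv' hfe
    have : f (u - v) = 0 := by simp [map_sub, hfe]
    obtain ⟨t, ht⟩ := hker _ this
    exact collinear_case dvec u v hdne huv hu hu' hv hv' t ht
  have f12 : f x₁ ≠ f x₂ := hfne _ _ hne12 hx1 hx1' hx2 hx2'
  have f13 : f x₁ ≠ f x₃ := hfne _ _ hne13 hx1 hx1' hx3 hx3'
  have f23 : f x₂ ≠ f x₃ := hfne _ _ hne23 hx2 hx2' hx3 hx3'
  -- find the middle one and conclude
  rcases lt_or_gt_of_ne f12 with h12' | h12' <;>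
    rcases lt_or_gt_of_ne f13 with h13' | h13' <;>
      rcases lt_or_gt_of_ne f23 with h23' | h23'
  · exact ordered_case dvec f hker x₁ x₂ x₃ hne13 hx1 hx1' hx2 hx2' hx3 hx3' h12' h23'
  · exact ordered_case dvec f hker x₁ x₃ x₂ hne12 hx1 hx1' hx3 hx3' hx2 hx2' h13' h23'
  · linarith
  · exact ordered_case dvec f hker x₃ x₁ x₂ hne23.symm hx3 hx3' hx1 hx1' hx2 hx2' h13' h12'
  · exact ordered_case dvec f hker x₂ x₁ x₃ hne23 hx2 hx2' hx1 hx1' hx3 hx3' h12' h13'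
  · linarith
  · exact ordered_case dvec f hker x₂ x₃ x₁ hne12.symm hx2 hx2' hx3 hx3' hx1 hx1' h23' h13'
  · exact ordered_case dvec f hker x₃ x₂ x₁ hne13.symm hx3 hx3' hx2 hx2' hx1 hx1' h23' h12'
end

section
/- Let H be a line in a normed plane, p a point not on H, and q a point on H such that the vector p − q is Birkhoff orthogonal to the direction of H. If q₁ and q₂ lie on H on the same side of q with q₁ between q and q₂, then ‖p − q₁‖ ≤ ‖p − q₂‖. -/
/-- Let `H = {q + s • v}` be a line in a normed plane, `p ∉ H`, with `p − q`
Birkhoff orthogonal to `v`. If `q₁ = q + s₁ • v` and `q₂ = q + s₂ • v` with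
`0 ≤ s₁ ≤ s₂`, then `‖p − q₁‖ ≤ ‖p − q₂‖`. -/
theorem birkhoff_foot_monotone {X : Type*} [NormedAddCommGroup X]
    [NormedSpace ℝ X] (hdim : Module.finrank ℝ X = 2)
    (p q v : X) (hv : v ≠ 0) (hpH : p ∉ {y : X | ∃ s : ℝ, y = q + s • v})
    (horth : ∀ t : ℝ, ‖p - q‖ ≤ ‖p - q + t • v‖)
    (s₁ s₂ : ℝ) (hs₁ : 0 ≤ s₁) (hs₁₂ : s₁ ≤ s₂) :
    ‖p - (q + s₁ • v)‖ ≤ ‖p - (q + s₂ • v)‖ := by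
  rcases eq_or_lt_of_le (hs₁.trans hs₁₂) with h | h
  · have hs1 : s₁ = 0 := le_antisymm (hs₁₂.trans h.symm.le) hs₁
    rw [hs1, ← h]
  · set t : ℝ := s₁ / s₂ with ht
    have ht0 : 0 ≤ t := div_nonneg hs₁ h.le
    have ht1 : t ≤ 1 := (div_le_one h).2 hs₁₂
    have hts : t * s₂ = s₁ := div_mul_cancel₀ _ h.ne'
    have hmin : ‖p - q‖ ≤ ‖p - (q + s₂ • v)‖ := by
      have := horth (-s₂)
      simpa [neg_smul, ← sub_eq_add_neg, sub_add_eq_sub_sub] using this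
    have hid : p - (q + s₁ • v) = (1 - t) • (p - q) + t • (p - (q + s₂ • v)) := by
      rw [← hts]
      module
    calc ‖p - (q + s₁ • v)‖ = ‖(1 - t) • (p - q) + t • (p - (q + s₂ • v))‖ := by rw [hid]
      _ ≤ (1 - t) * ‖p - q‖ + t * ‖p - (q + s₂ • v)‖ := by
          refine (norm_add_le _ _).trans ?_
          rw [norm_smul, norm_smul, Real.norm_of_nonneg (by linarith), Real.norm_of_nonneg ht0]
      _ ≤ (1 - t) * ‖p - (q + s₂ • v)‖ + t * ‖p - (q + s₂ • v)‖ := by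
          gcongr
      _ = ‖p - (q + s₂ • v)‖ := by ring
end

section
/- Let C be a compact convex body in the plane with boundary γ, and let C′ = C + v be a translate with boundary γ′. Then γ ∩ γ′ is the union of at most two segments (each possibly degenerate to a point or empty). In particular, if C is strictly convex, γ ∩ γ′ contains at most two points. -/
/-!
After a linear change of coordinates the translation is horizontal, by `(e, 0)` with `e > 0`, and a
point `x` lies on both boundaries iff `x` and `x - (e, 0)` lie on `∂D`. At a height strictly between
the lowest and highest points of `D` this forces `[x - (e, 0), x]` to be the whole horizontal chord
of `D` at that height: a supporting line at `x` or at `x - (e, 0)` would otherwise have to be both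
horizontal and vertical. Chord lengths are concave in the height.

If some chord is longer than `e`, there is such a chord at a height `y₀` strictly inside, and on
each side of `y₀` the intersection is either the part of the bottom (top) face shared with its
translate, or at most one point. Otherwise the intersection is all of `D ∩ (D + (e, 0))`, a compact
convex set meeting each horizontal line at most once, hence a segment.
-/

open Set Filter Topology

section General

lemma frontier_image_add_right {G : Type*} [AddGroup G] [TopologicalSpace G] [ContinuousAdd G]
    (s : Set G) (v : G) : frontier ((· + v) '' s) = (· - v) ⁻¹' frontier s := by
  have h := (Homeomorph.addRight v).image_frontier s
  rw [Homeomorph.coe_addRight] at h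
  rw [← h, image_add_right]
  simp [sub_eq_add_neg]

variable {E F : Type*} [AddCommGroup E] [Module ℝ E] [AddCommGroup F] [Module ℝ F]

def IsSegmentOrEmpty (S : Set E) : Prop :=
  S = ∅ ∨ ∃ a b : E, S = segment ℝ a b

lemma Set.Subsingleton.isSegmentOrEmpty {S : Set E} (hS : S.Subsingleton) :
    IsSegmentOrEmpty S := by
  obtain rfl | ⟨a, rfl⟩ := hS.eq_empty_or_singleton
  · exact Or.inl rfl
  · exact Or.inr ⟨a, a, (segment_same ℝ a).symm⟩

lemma IsSegmentOrEmpty.image {S : Set E} (hS : IsSegmentOrEmpty S) (f : E →ₗ[ℝ] F) :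
    IsSegmentOrEmpty (f '' S) := by
  obtain rfl | ⟨a, b, rfl⟩ := hS
  · exact Or.inl (image_empty _)
  · exact Or.inr ⟨f a, f b, image_segment ℝ f.toAffineMap a b⟩

lemma IsSegmentOrEmpty.encard_le_one [TopologicalSpace E] {S C : Set E}
    (hS : IsSegmentOrEmpty S) (hC : StrictConvex ℝ C) (hCc : IsClosed C)
    (hSC : S ⊆ frontier C) : S.encard ≤ 1 := by
  obtain rfl | ⟨a, b, rfl⟩ := hS
  · simp
  have hfr := hCc.frontier_subset
  obtain rfl : a = b := hC.eq_of_openSegment_subset_frontier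
    (hfr (hSC (left_mem_segment ℝ a b))) (hfr (hSC (right_mem_segment ℝ a b)))
    ((openSegment_subset_segment ℝ a b).trans hSC)
  simp

lemma IsCompact.isSegmentOrEmpty_of_injOn [TopologicalSpace E] {S : Set E} (hS : IsCompact S)
    (hconv : Convex ℝ S) (f : E →L[ℝ] ℝ) (hf : InjOn f S) : IsSegmentOrEmpty S := by
  obtain rfl | hne := S.eq_empty_or_nonempty
  · exact Or.inl rfl
  obtain ⟨a, ha, hmin⟩ := hS.exists_isMinOn hne f.continuous.continuousOn
  obtain ⟨b, hb, hmax⟩ := hS.exists_isMaxOn hne f.continuous.continuousOn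
  refine Or.inr ⟨a, b, (hconv.segment_subset ha hb).antisymm' fun x hx => ?_⟩
  have hseg : f '' segment ℝ a b = segment ℝ (f a) (f b) :=
    image_segment ℝ (f : E →ₗ[ℝ] ℝ).toAffineMap a b
  have hfx : f x ∈ f '' segment ℝ a b := by
    rw [hseg, segment_eq_Icc (hmin hb)]
    exact ⟨hmin hx, hmax hx⟩
  obtain ⟨z, hz, hzx⟩ := hfx
  rwa [← hf (hconv.segment_subset ha hb hz) hx hzx]

lemma Convex.inter_preimage_sub {s : Set E} (hs : Convex ℝ s) (v : E) :
    Convex ℝ (s ∩ (· - v) ⁻¹' s) :=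
  hs.inter (by simpa [sub_eq_add_neg] using hs.translate_preimage_left (-v))

lemma exists_pos_add_smul_mem_of_mem_interior [TopologicalSpace E] [ContinuousAdd E]
    [ContinuousSMul ℝ E] {s : Set E} {x : E} (hx : x ∈ interior s) (u : E) :
    ∃ r : ℝ, 0 < r ∧ x + r • u ∈ s := by
  have hcont : Continuous fun r : ℝ => x + r • u := by fun_prop
  have hnhds : ∀ᶠ r in 𝓝 (0 : ℝ), x + r • u ∈ s :=
    hcont.continuousAt.preimage_mem_nhds (by simpa using mem_interior_iff_mem_nhds.mp hx)
  exact ((eventually_mem_nhdsWithin (s := Ioi 0)).and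
    (hnhds.filter_mono nhdsWithin_le_nhds)).exists

lemma ContinuousLinearEquiv.image_frontier_inter_frontier_translate [TopologicalSpace E]
    [TopologicalSpace F] (A : E ≃L[ℝ] F) (C : Set E) (v : E) :
    A '' (frontier C ∩ frontier ((· + v) '' C)) =
      frontier (A '' C) ∩ frontier ((· + A v) '' (A '' C)) := by
  have hfr : ∀ s : Set E, A '' frontier s = frontier (A '' s) := by
    simpa only [A.coe_toHomeomorph] using A.toHomeomorph.image_frontier
  rw [image_inter A.injective, hfr, hfr, image_image, image_image]
  simp only [map_add]

lemma ContinuousLinearEquiv.interior_image_nonempty [TopologicalSpace E] [TopologicalSpace F]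
    (A : E ≃L[ℝ] F) {C : Set E} (h : (interior C).Nonempty) :
    (interior (A '' C)).Nonempty := by
  rw [← A.coe_toHomeomorph, ← A.toHomeomorph.image_interior]
  exact h.image _

end General

section Horizontal

variable {D : Set (ℝ × ℝ)} {e : ℝ}

def HasChord (D : Set (ℝ × ℝ)) (y w : ℝ) : Prop :=
  ∃ s, (s, y) ∈ D ∧ (s + w, y) ∈ D

lemma hasChord_of_mem {a b y : ℝ} (ha : (a, y) ∈ D) (hb : (b, y) ∈ D) :
    HasChord D y (b - a) :=
  ⟨a, ha, by rwa [add_sub_cancel]⟩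

lemma Prod.sub_mk_zero {α β : Type*} [AddGroup α] [AddGroup β] (x : α × β) (a : α) :
    x - (a, 0) = (x.1 - a, x.2) :=
  Prod.ext rfl (sub_zero x.2)

lemma hasChord_of_mem_of_sub_mem {x : ℝ × ℝ} (hx : x ∈ D) (hx' : x - (e, 0) ∈ D) :
    HasChord D x.2 e := by
  rw [Prod.sub_mk_zero] at hx'
  simpa using hasChord_of_mem hx' hx

lemma Convex.hasChord_combo (hconv : Convex ℝ D) {y₁ y₂ w₁ w₂ a b : ℝ}
    (h₁ : HasChord D y₁ w₁) (h₂ : HasChord D y₂ w₂) (ha : 0 ≤ a) (hb : 0 ≤ b) (hab : a + b = 1) :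
    HasChord D (a * y₁ + b * y₂) (a * w₁ + b * w₂) := by
  obtain ⟨s₁, hl₁, hr₁⟩ := h₁
  obtain ⟨s₂, hl₂, hr₂⟩ := h₂
  refine ⟨a * s₁ + b * s₂, by simpa using hconv hl₁ hl₂ ha hb hab, ?_⟩
  convert hconv hr₁ hr₂ ha hb hab using 1
  simp only [Prod.smul_mk, Prod.mk_add_mk, smul_eq_mul]
  congr 1
  ring

lemma Convex.exists_hasChord_gt_of_mem_openSegment (hconv : Convex ℝ D) {y y₁ y₂ w₁ w₂ : ℝ}
    (h₁ : HasChord D y₁ w₁) (h₂ : HasChord D y₂ w₂) (hw₁ : e ≤ w₁) (hw₂ : e < w₂)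
    (hy : y ∈ openSegment ℝ y₁ y₂) : ∃ w, e < w ∧ HasChord D y w := by
  obtain ⟨a, b, ha, hb, hab, rfl⟩ := hy
  have hsum : a * e + b * e = e := by rw [← add_mul, hab, one_mul]
  refine ⟨a * w₁ + b * w₂, ?_, hconv.hasChord_combo h₁ h₂ ha.le hb.le hab⟩
  linarith [mul_le_mul_of_nonneg_left hw₁ ha.le, mul_lt_mul_of_pos_left hw₂ hb]

lemma Convex.exists_hasChord_gt_toward (hconv : Convex ℝ D) {y w : ℝ} {z : ℝ × ℝ}
    (hch : HasChord D y w) (he : 0 ≤ e) (hew : e < w) (hz : z ∈ D) :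
    ∃ y' ∈ openSegment ℝ y z.2, ∃ w', e < w' ∧ HasChord D y' w' := by
  have hw : 0 < w := he.trans_lt hew
  have hz' : HasChord D z.2 0 := ⟨z.1, by simpa using hz, by simpa using hz⟩
  -- weights making the combined width `(w + e) / 2`
  set a := (w + e) / (2 * w)
  set b := (w - e) / (2 * w)
  have ha : 0 < a := by positivity
  have hb : 0 < b := div_pos (by linarith) (by positivity)
  have hab : a + b = 1 := by simp only [a, b]; field_simp; ring
  refine ⟨a * y + b * z.2, ⟨a, b, ha, hb, hab, rfl⟩, a * w + b * 0, ?_,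
    hconv.hasChord_combo hch hz' ha.le hb.le hab⟩
  have : a * w = (w + e) / 2 := by simp only [a]; field_simp
  linarith

lemma Convex.mem_interior_of_between (hconv : Convex ℝ D) (hint : (interior D).Nonempty)
    {p q x : ℝ × ℝ} {a b : ℝ} (hp : p ∈ D) (hq : q ∈ D) (ha : (a, x.2) ∈ D) (hb : (b, x.2) ∈ D)
    (hpx : p.2 < x.2) (hxq : x.2 < q.2) (hax : a < x.1) (hxb : x.1 < b) : x ∈ interior D := by
  by_contra hx
  obtain ⟨f, u, hf0, hfD, hfx⟩ := geometric_hahn_banach_of_nonempty_interior hconv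
    (convex_singleton x) (disjoint_singleton_right.2 hx) hint (singleton_nonempty x)
  have hf : ∀ z : ℝ × ℝ, f z = f (1, 0) * z.1 + f (0, 1) * z.2 := by
    intro z
    conv_lhs => rw [show z = z.1 • ((1, 0) : ℝ × ℝ) + z.2 • (0, 1) by ext <;> simp]
    simp only [map_add, map_smul, smul_eq_mul]
    ring
  have h₁ := hfD _ ha
  have h₂ := hfD _ hb
  have h₃ := hfD _ hp
  have h₄ := hfD _ hq
  have h₅ := hfx x rfl
  rw [hf] at h₁ h₂ h₃ h₄ h₅
  have hα : f (1, 0) = 0 := le_antisymm (by nlinarith) (by nlinarith)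
  simp only [hα, zero_mul, zero_add] at h₃ h₄ h₅
  have hβ : f (0, 1) = 0 := le_antisymm (by nlinarith) (by nlinarith)
  exact hf0 (ContinuousLinearMap.ext fun z => by simp [hf z, hα, hβ])

lemma IsCompact.isSegmentOrEmpty_inter_snd_eq (hD : IsCompact D) (hconv : Convex ℝ D) (c : ℝ) :
    IsSegmentOrEmpty (D ∩ {x | x.2 = c}) :=
  (hD.inter_right (isClosed_eq continuous_snd continuous_const)).isSegmentOrEmpty_of_injOn
    (hconv.inter ((convex_singleton c).linear_preimage (LinearMap.snd ℝ ℝ ℝ)))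
    (ContinuousLinearMap.fst ℝ ℝ ℝ) fun _ hx _ hx' h => Prod.ext h (hx.2.trans hx'.2.symm)

lemma HasChord.le_of_mem_frontier (hD : IsClosed D) (hconv : Convex ℝ D)
    (hint : (interior D).Nonempty) (he : 0 < e) {x p q : ℝ × ℝ} (hx : x ∈ frontier D)
    (hx' : x - (e, 0) ∈ frontier D) (hp : p ∈ D) (hq : q ∈ D) (hpx : p.2 < x.2) (hxq : x.2 < q.2)
    {w : ℝ} (hch : HasChord D x.2 w) : w ≤ e := by
  rw [hD.frontier_eq] at hx hx'
  rw [Prod.sub_mk_zero] at hx'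
  obtain ⟨s, hs, hsw⟩ := hch
  by_contra! hew
  rcases lt_or_ge x.1 (s + w) with h | h
  · exact hx.2 (hconv.mem_interior_of_between hint hp hq hx'.1 hsw hpx hxq (by linarith) h)
  · exact hx'.2 (hconv.mem_interior_of_between hint hp hq hs hx.1 hpx hxq (by linarith)
      (by linarith))

lemma IsMinOn.snd_lt_of_mem_interior {p x : ℝ × ℝ} (hmin : IsMinOn Prod.snd D p)
    (hx : x ∈ interior D) : p.2 < x.2 := by
  obtain ⟨r, hr, hxr⟩ := exists_pos_add_smul_mem_of_mem_interior hx ((0, -1) : ℝ × ℝ)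
  have h : p.2 ≤ (x + r • ((0, -1) : ℝ × ℝ)).2 := hmin hxr
  simp only [Prod.snd_add, Prod.smul_snd, smul_eq_mul] at h
  linarith

lemma IsMaxOn.snd_lt_of_mem_interior {q x : ℝ × ℝ} (hmax : IsMaxOn Prod.snd D q)
    (hx : x ∈ interior D) : x.2 < q.2 := by
  obtain ⟨r, hr, hxr⟩ := exists_pos_add_smul_mem_of_mem_interior hx ((0, 1) : ℝ × ℝ)
  have h : (x + r • ((0, 1) : ℝ × ℝ)).2 ≤ q.2 := hmax hxr
  simp only [Prod.snd_add, Prod.smul_snd, smul_eq_mul] at h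
  linarith

lemma fst_le_of_forall_hasChord_le {x x' : ℝ × ℝ} (hx : x ∈ D) (hx' : x' - (e, 0) ∈ D)
    (h : x.2 = x'.2) (hle : ∀ w, HasChord D x.2 w → w ≤ e) : x.1 ≤ x'.1 := by
  rw [Prod.sub_mk_zero, ← h] at hx'
  linarith [hle _ (hasChord_of_mem hx' hx)]

lemma isSegmentOrEmpty_of_forall_hasChord_le (hD : IsCompact D) (hconv : Convex ℝ D)
    (hle : ∀ y w, HasChord D y w → w ≤ e) :
    IsSegmentOrEmpty (frontier D ∩ frontier ((· + (e, 0)) '' D)) := by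
  have hcD := hD.isClosed
  have hMK : frontier D ∩ frontier ((· + (e, 0)) '' D) = D ∩ (· - (e, 0)) ⁻¹' D := by
    rw [frontier_image_add_right]
    refine (inter_subset_inter hcD.frontier_subset (preimage_mono hcD.frontier_subset)).antisymm ?_
    rintro x ⟨hx, hx'⟩
    rw [mem_preimage, Prod.sub_mk_zero] at hx'
    rw [mem_inter_iff, mem_preimage, Prod.sub_mk_zero, hcD.frontier_eq]
    refine ⟨⟨hx, fun hxi => ?_⟩, hx', fun hxi => ?_⟩
    · obtain ⟨r, hr, hxr⟩ := exists_pos_add_smul_mem_of_mem_interior hxi ((1, 0) : ℝ × ℝ)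
      rw [show x + r • ((1, 0) : ℝ × ℝ) = (x.1 + r, x.2) by ext <;> simp] at hxr
      linarith [hle _ _ (hasChord_of_mem hx' hxr)]
    · obtain ⟨r, hr, hxr⟩ := exists_pos_add_smul_mem_of_mem_interior hxi ((-1, 0) : ℝ × ℝ)
      rw [show (x.1 - e, x.2) + r • ((-1, 0) : ℝ × ℝ) = (x.1 - e - r, x.2) by
        ext <;> simp; ring] at hxr
      linarith [hle _ _ (hasChord_of_mem hxr hx)]
  have hinj : InjOn (ContinuousLinearMap.snd ℝ ℝ ℝ) (D ∩ (· - (e, 0)) ⁻¹' D) := by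
    intro x hx x' hx' h
    exact Prod.ext (le_antisymm (fst_le_of_forall_hasChord_le hx.1 hx'.2 h (hle _))
      (fst_le_of_forall_hasChord_le hx'.1 hx.2 h.symm (hle _))) h
  rw [hMK]
  exact (hD.inter_right (hcD.preimage (continuous_sub_right _))).isSegmentOrEmpty_of_injOn
    (hconv.inter_preimage_sub _) _ hinj

lemma isSegmentOrEmpty_frontier_inter_below (hD : IsCompact D) (hconv : Convex ℝ D)
    (hint : (interior D).Nonempty) (he : 0 < e) {p : ℝ × ℝ} (hp : p ∈ D)
    (hmin : IsMinOn Prod.snd D p) {y₀ w₀ : ℝ} (hy₀ : p.2 < y₀) (hw₀ : e < w₀)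
    (h₀ : HasChord D y₀ w₀) :
    IsSegmentOrEmpty (frontier D ∩ frontier ((· + (e, 0)) '' D) ∩ {x | x.2 < y₀}) := by
  have hcD := hD.isClosed
  rw [frontier_image_add_right]
  set M := frontier D ∩ (· - (e, 0)) ⁻¹' frontier D
  have hMD : ∀ x ∈ M, HasChord D x.2 e := fun x hx =>
    hasChord_of_mem_of_sub_mem (hcD.frontier_subset hx.1) (hcD.frontier_subset hx.2)
  have hnarrow : ∀ x ∈ M, p.2 < x.2 → x.2 < y₀ → ∀ w, HasChord D x.2 w → w ≤ e := by
    obtain ⟨s₀, hs₀, -⟩ := h₀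
    exact fun x hx hpx hxy w hw => hw.le_of_mem_frontier hcD hconv hint he hx.1 hx.2 hp hs₀ hpx hxy
  -- a chord of width `e` below such a point, together with the wide chord at height `y₀`,
  -- would produce a chord of width `> e` at its own height
  have hbelow : ∀ x ∈ M, p.2 < x.2 → x.2 < y₀ → ∀ y < x.2, ¬ HasChord D y e := by
    intro x hx hpx hxy y hy hch
    obtain ⟨w, hew, hw⟩ := hconv.exists_hasChord_gt_of_mem_openSegment hch h₀ le_rfl hw₀
      (by rw [openSegment_eq_Ioo (hy.trans hxy)]; exact ⟨hy, hxy⟩)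
    exact (hnarrow x hx hpx hxy w hw).not_gt hew
  have hfrontier : ∀ x ∈ D, x.2 = p.2 → x ∈ frontier D := fun x hx h =>
    hcD.frontier_eq ▸ ⟨hx, fun hxi => (hmin.snd_lt_of_mem_interior hxi).ne' h⟩
  by_cases hface : HasChord D p.2 e
  · have heq : M ∩ {x | x.2 < y₀} = D ∩ (· - (e, 0)) ⁻¹' D ∩ {x | x.2 = p.2} := by
      ext x
      refine ⟨fun ⟨hx, hxy⟩ => ⟨⟨hcD.frontier_subset hx.1, hcD.frontier_subset hx.2⟩, ?_⟩,
        fun ⟨⟨hx, hx'⟩, h⟩ => ⟨⟨hfrontier x hx h, hfrontier _ hx' (by simpa using h)⟩,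
          lt_of_eq_of_lt h hy₀⟩⟩
      by_contra hne
      exact hbelow x hx ((hmin (hcD.frontier_subset hx.1)).lt_of_ne' hne) hxy _
        ((hmin (hcD.frontier_subset hx.1)).lt_of_ne' hne) hface
    rw [heq]
    exact (hD.inter_right (hcD.preimage (continuous_sub_right _))).isSegmentOrEmpty_inter_snd_eq
      (hconv.inter_preimage_sub _) p.2
  · apply Set.Subsingleton.isSegmentOrEmpty
    have hlow : ∀ x ∈ M, p.2 < x.2 := fun x hx =>
      (hmin (hcD.frontier_subset hx.1)).lt_of_ne' fun h => hface (h ▸ hMD x hx)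
    have hheight : ∀ x ∈ M ∩ {x | x.2 < y₀}, ∀ x' ∈ M ∩ {x | x.2 < y₀}, ¬ x.2 < x'.2 :=
      fun x hx x' hx' h => hbelow x' hx'.1 (hlow x' hx'.1) hx'.2 x.2 h (hMD x hx.1)
    intro x hx x' hx'
    have h : x.2 = x'.2 :=
      le_antisymm (not_lt.1 (hheight x' hx' x hx)) (not_lt.1 (hheight x hx x' hx'))
    exact Prod.ext (le_antisymm
      (fst_le_of_forall_hasChord_le (hcD.frontier_subset hx.1.1) (hcD.frontier_subset hx'.1.2) h
        (hnarrow x hx.1 (hlow x hx.1) hx.2))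
      (fst_le_of_forall_hasChord_le (hcD.frontier_subset hx'.1.1) (hcD.frontier_subset hx.1.2)
        h.symm (hnarrow x' hx'.1 (hlow x' hx'.1) hx'.2))) h

lemma isSegmentOrEmpty_frontier_inter_above (hD : IsCompact D) (hconv : Convex ℝ D)
    (hint : (interior D).Nonempty) (he : 0 < e) {q : ℝ × ℝ} (hq : q ∈ D)
    (hmax : IsMaxOn Prod.snd D q) {y₀ w₀ : ℝ} (hy₀ : y₀ < q.2) (hw₀ : e < w₀)
    (h₀ : HasChord D y₀ w₀) :
    IsSegmentOrEmpty (frontier D ∩ frontier ((· + (e, 0)) '' D) ∩ {x | y₀ < x.2}) := by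
  let σ : (ℝ × ℝ) ≃L[ℝ] ℝ × ℝ :=
    (ContinuousLinearEquiv.refl ℝ ℝ).prodCongr (ContinuousLinearEquiv.neg ℝ)
  have hσ : ∀ x : ℝ × ℝ, σ x = (x.1, -x.2) := fun x => rfl
  have hmin : IsMinOn Prod.snd (σ '' D) (σ q) := by
    rintro _ ⟨z, hz, rfl⟩
    simpa [hσ] using hmax hz
  have hchord : HasChord (σ '' D) (-y₀) w₀ := by
    obtain ⟨s, hs, hsw⟩ := h₀
    exact ⟨s, ⟨_, hs, rfl⟩, ⟨_, hsw, rfl⟩⟩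
  have hbelow := isSegmentOrEmpty_frontier_inter_below (hD.image σ.continuous)
    (hconv.linear_image (σ : (ℝ × ℝ) →ₗ[ℝ] ℝ × ℝ)) (σ.interior_image_nonempty hint) he
    (mem_image_of_mem σ hq) hmin (by simpa [hσ]) hw₀ hchord
  have himage : σ '' (frontier D ∩ frontier ((· + (e, 0)) '' D) ∩ {x | y₀ < x.2}) =
      frontier (σ '' D) ∩ frontier ((· + (e, 0)) '' (σ '' D)) ∩ {x | x.2 < -y₀} := by
    have hv : σ (e, 0) = (e, 0) := by simp [hσ]
    have hhalf : σ '' {x | y₀ < x.2} = {x | x.2 < -y₀} := by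
      ext x
      refine ⟨fun ⟨z, hz, hzx⟩ => ?_, fun hx => ⟨σ x, ?_, ?_⟩⟩
      · simpa [← hzx, hσ] using hz
      · simpa [hσ] using lt_neg.mp hx
      · simp [hσ]
    rw [image_inter σ.injective, σ.image_frontier_inter_frontier_translate, hv, hhalf]
  rw [← σ.symm_image_image (_ ∩ _), himage]
  exact hbelow.image (σ.symm : (ℝ × ℝ) →ₗ[ℝ] ℝ × ℝ)

lemma exists_isSegmentOrEmpty_frontier_inter_frontier_add_horizontal (hD : IsCompact D)
    (hconv : Convex ℝ D) (hint : (interior D).Nonempty) (he : 0 < e) :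
    ∃ S₁ S₂ : Set (ℝ × ℝ), IsSegmentOrEmpty S₁ ∧ IsSegmentOrEmpty S₂ ∧
      frontier D ∩ frontier ((· + (e, 0)) '' D) = S₁ ∪ S₂ := by
  by_cases hle : ∀ y w, HasChord D y w → w ≤ e
  · exact ⟨_, ∅, isSegmentOrEmpty_of_forall_hasChord_le hD hconv hle, Or.inl rfl,
      (union_empty _).symm⟩
  push Not at hle
  obtain ⟨y, w, hch, hew⟩ := hle
  obtain ⟨z, hz⟩ := hint
  have hzD := interior_subset hz
  obtain ⟨p, hp, hmin⟩ := hD.exists_isMinOn ⟨z, hzD⟩ continuous_snd.continuousOn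
  obtain ⟨q, hq, hmax⟩ := hD.exists_isMaxOn ⟨z, hzD⟩ continuous_snd.continuousOn
  obtain ⟨y₀, hy₀, w₀, hw₀, h₀⟩ := hconv.exists_hasChord_gt_toward hch he.le hew hzD
  have hpq : p.2 < y₀ ∧ y₀ < q.2 := by
    obtain ⟨s, hs, -⟩ := hch
    have hpy : p.2 ≤ y := hmin hs
    have hyq : y ≤ q.2 := hmax hs
    have hpz := hmin.snd_lt_of_mem_interior hz
    have hzq := hmax.snd_lt_of_mem_interior hz
    obtain ⟨a, b, ha, hb, hab, rfl⟩ := hy₀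
    obtain rfl : b = 1 - a := by linarith
    simp only [smul_eq_mul]
    constructor
    · nlinarith [mul_le_mul_of_nonneg_left hpy ha.le, mul_lt_mul_of_pos_left hpz hb]
    · nlinarith [mul_le_mul_of_nonneg_left hyq ha.le, mul_lt_mul_of_pos_left hzq hb]
  refine ⟨_, _, isSegmentOrEmpty_frontier_inter_below hD hconv ⟨z, hz⟩ he hp hmin hpq.1 hw₀ h₀,
    isSegmentOrEmpty_frontier_inter_above hD hconv ⟨z, hz⟩ he hq hmax hpq.2 hw₀ h₀, ?_⟩
  rw [← inter_union_distrib_left, eq_comm, inter_eq_left]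
  intro x hx
  rcases lt_trichotomy x.2 y₀ with h | rfl | h
  · exact Or.inl h
  · rw [frontier_image_add_right] at hx
    exact absurd (h₀.le_of_mem_frontier hD.isClosed hconv ⟨z, hz⟩ he hx.1 hx.2 hp hq hpq.1 hpq.2)
      hw₀.not_ge
  · exact Or.inr h

end Horizontal

theorem exists_isSegmentOrEmpty_frontier_inter_frontier_translate {C : Set (ℝ × ℝ)}
    (hC : IsCompact C) (hconv : Convex ℝ C) (hint : (interior C).Nonempty) {v : ℝ × ℝ}
    (hv : v ≠ 0) :
    ∃ S₁ S₂ : Set (ℝ × ℝ), IsSegmentOrEmpty S₁ ∧ IsSegmentOrEmpty S₂ ∧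
      frontier C ∩ frontier ((· + v) '' C) = S₁ ∪ S₂ := by
  obtain ⟨A, hA⟩ := SeparatingDual.exists_continuousLinearEquiv_apply_eq (R := ℝ) hv
    (y := ((1, 0) : ℝ × ℝ)) (by simp)
  obtain ⟨S₁, S₂, h₁, h₂, hS⟩ := exists_isSegmentOrEmpty_frontier_inter_frontier_add_horizontal
    (hC.image A.continuous) (hconv.linear_image (A : (ℝ × ℝ) →ₗ[ℝ] ℝ × ℝ))
    (A.interior_image_nonempty hint) one_pos
  refine ⟨A.symm '' S₁, A.symm '' S₂, h₁.image (A.symm : (ℝ × ℝ) →ₗ[ℝ] ℝ × ℝ),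
    h₂.image (A.symm : (ℝ × ℝ) →ₗ[ℝ] ℝ × ℝ), ?_⟩
  rw [← image_union, ← hS, ← hA, ← A.image_frontier_inter_frontier_translate, A.symm_image_image]

/-- The boundary of a planar compact convex body meets the boundary of any of
its translates in the union of at most two (possibly degenerate or empty)
segments; if the body is strictly convex, the intersection has at most two
points. -/
theorem boundary_translate_inter {C : Set (ℝ × ℝ)} (hC : IsCompact C)
    (hconv : Convex ℝ C) (hint : (interior C).Nonempty)
    (v : ℝ × ℝ) (hv : v ≠ 0) :
    (∃ S₁ S₂ : Set (ℝ × ℝ),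
        (S₁ = ∅ ∨ ∃ a b : ℝ × ℝ, S₁ = segment ℝ a b) ∧
        (S₂ = ∅ ∨ ∃ a b : ℝ × ℝ, S₂ = segment ℝ a b) ∧
        frontier C ∩ frontier ((fun x => x + v) '' C) = S₁ ∪ S₂) ∧
      (StrictConvex ℝ C →
        (frontier C ∩ frontier ((fun x => x + v) '' C)).encard ≤ 2) := by
  obtain ⟨S₁, S₂, h₁, h₂, hS⟩ :=
    exists_isSegmentOrEmpty_frontier_inter_frontier_translate hC hconv hint hv
  refine ⟨⟨S₁, S₂, h₁, h₂, hS⟩, fun hstrict => ?_⟩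
  have hsub : S₁ ∪ S₂ ⊆ frontier C := hS ▸ inter_subset_left
  rw [hS]
  calc (S₁ ∪ S₂).encard ≤ S₁.encard + S₂.encard := encard_union_le _ _
    _ ≤ 1 + 1 := add_le_add
        (h₁.encard_le_one hstrict hC.isClosed (subset_union_left.trans hsub))
        (h₂.encard_le_one hstrict hC.isClosed (subset_union_right.trans hsub))
    _ = 2 := one_add_one_eq_two
end
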